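/- arXiv:1409.5892 — 5 statements merged into one kernel-verified Lean document; each statement's English description precedes it below -/
import Mathlib

section
/- Let λ > 0 and let G : ℝ × ℝ → ℝ be Lipschitz continuous in both variables with λ ≤ G(t,η) ≤ 1/λ for all (t,η), and suppose G(t,η) is 1-periodic in the oscillating variable η. Fix p ∈ ℝ and T > 0. For each ε ∈ (0,1] let X^ε : [0,T] → ℝ be the solution of the initial value problem dX^ε/dt = 1/G(t, X^ε(t)/ε), X^ε(0) = p. Then there exist a Lipschitz continuous function X⁰ : [0,T] → ℝ and a constant C > 0 (independent of ε) such that sup_{t∈[0,T]} |X^ε(t) − X⁰(t)| ≤ C ε for all ε ∈ (0,1]. -/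
/-!
Let `Ḡ` be the average of `G` over a period of the fast variable and `X⁰` the solution of
`X⁰' = 1 / Ḡ(t)`, `X⁰(0) = p`; its inverse `τ` solves `τ' = Ḡ(τ)`, `τ(p) = 0`. We compare
`X^ε` with `X⁰` in the space variable, i.e. show `τ (X^ε t) = t + O(ε)`.

Over each period `[a, a + ε]`, freezing the slow variable `τ s` at `τ a` costs `O(ε²)`, and the
frozen integrand `G (τ a, s / ε) - Ḡ (τ a)` has mean zero. Summing over the `O(1/ε)` periods,
`∫_p^x G (τ y, y / ε) dy = τ x + O(ε)`. Along `X^ε` the left side minus `t` has derivative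
`G (τ (X^ε t), X^ε t / ε) / G (t, X^ε t / ε) - 1 = O(|τ (X^ε t) - t|)`, so Gronwall's inequality
gives `τ (X^ε t) - t = O(ε)`, and the Lipschitz bound on `X⁰` turns this into `X^ε - X⁰ = O(ε)`.
-/

open Set Filter intervalIntegral Real NNReal

noncomputable def periodAverage (G : ℝ × ℝ → ℝ) (t : ℝ) : ℝ := ∫ η in (0:ℝ)..1, G (t, η)

section PeriodAverage

variable {G : ℝ × ℝ → ℝ} {L : ℝ≥0}

theorem le_periodAverage (hG : Continuous G) {m : ℝ} (hm : ∀ q, m ≤ G q) (t : ℝ) :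
    m ≤ periodAverage G t := by
  simpa [periodAverage] using integral_mono_on (μ := MeasureTheory.volume) zero_le_one
    intervalIntegrable_const ((by fun_prop : Continuous fun η => G (t, η)).intervalIntegrable 0 1)
    fun η _ => hm (t, η)

theorem periodAverage_le (hG : Continuous G) {M : ℝ} (hM : ∀ q, G q ≤ M) (t : ℝ) :
    periodAverage G t ≤ M := by
  simpa [periodAverage] using integral_mono_on (μ := MeasureTheory.volume) zero_le_one
    ((by fun_prop : Continuous fun η => G (t, η)).intervalIntegrable 0 1) intervalIntegrable_const
    fun η _ => hM (t, η)

theorem lipschitzWith_periodAverage (hG : Continuous G)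
    (hGt : ∀ η, LipschitzWith L fun t => G (t, η)) : LipschitzWith L (periodAverage G) := by
  refine LipschitzWith.of_dist_le_mul fun a b => ?_
  rw [dist_eq_norm, periodAverage, periodAverage, ← integral_sub
    ((by fun_prop : Continuous fun η => G (a, η)).intervalIntegrable 0 1)
    ((by fun_prop : Continuous fun η => G (b, η)).intervalIntegrable 0 1)]
  simpa using norm_integral_le_of_norm_le_const (a := 0) (b := 1)
    (f := fun η => G (a, η) - G (b, η)) fun η _ => by
      rw [← dist_eq_norm]; exact (hGt η).dist_le_mul a b

theorem integral_comp_div_eq_mul_periodAverage (hper : ∀ t η, G (t, η + 1) = G (t, η))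
    {ε : ℝ} (hε : ε ≠ 0) (t a : ℝ) :
    ∫ s in a..a + ε, G (t, s / ε) = ε * periodAverage G t := by
  have hper' : Function.Periodic (fun η => G (t, η)) 1 := hper t
  rw [integral_comp_div (fun η => G (t, η)) hε, add_div, div_self hε,
    hper'.intervalIntegral_add_eq _ 0, zero_add, smul_eq_mul, periodAverage]

theorem abs_integral_sub_periodAverage_period_le (hG : Continuous G)
    (hGt : ∀ η, LipschitzWith L fun t => G (t, η)) (hper : ∀ t η, G (t, η + 1) = G (t, η))
    {K : ℝ≥0} {τ : ℝ → ℝ} (hτ : LipschitzWith K τ) {ε : ℝ} (hε : 0 < ε) (a : ℝ) :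
    |∫ s in a..a + ε, (G (τ s, s / ε) - periodAverage G (τ s))| ≤ 2 * L * K * ε ^ 2 := by
  have hGbar := lipschitzWith_periodAverage hG hGt
  have hτc := hτ.continuous
  have hGbarc := hGbar.continuous
  have hfrozen : ∫ s in a..a + ε, (G (τ a, s / ε) - periodAverage G (τ a)) = 0 := by
    rw [integral_sub ((by fun_prop : Continuous fun s => G (τ a, s / ε)).intervalIntegrable _ _)
      intervalIntegrable_const, integral_comp_div_eq_mul_periodAverage hper hε.ne',
      integral_const, smul_eq_mul, add_sub_cancel_left, sub_self]
  have hclose : ∀ s ∈ uIoc a (a + ε), ‖(G (τ s, s / ε) - periodAverage G (τ s)) -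
      (G (τ a, s / ε) - periodAverage G (τ a))‖ ≤ 2 * L * K * ε := by
    intro s hs
    rw [uIoc_of_le (by linarith)] at hs
    have hsa : dist s a ≤ ε := by
      rw [Real.dist_eq, abs_of_pos (by linarith [hs.1])]; linarith [hs.2]
    have hG' := ((hGt (s / ε)).comp hτ).dist_le_mul s a
    have hGbar' := (hGbar.comp hτ).dist_le_mul s a
    rw [dist_eq_norm] at hG' hGbar'
    calc _ = ‖(G (τ s, s / ε) - G (τ a, s / ε)) -
          (periodAverage G (τ s) - periodAverage G (τ a))‖ := by ring_nf
      _ ≤ L * K * dist s a + L * K * dist s a := (norm_sub_le _ _).trans (add_le_add hG' hGbar')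
      _ ≤ 2 * L * K * ε := by
          have := mul_le_mul_of_nonneg_left hsa (mul_nonneg L.coe_nonneg K.coe_nonneg)
          linarith
  have := norm_integral_le_of_norm_le_const hclose
  rwa [integral_sub ((by fun_prop : Continuous fun s =>
      G (τ s, s / ε) - periodAverage G (τ s)).intervalIntegrable _ _)
    ((by fun_prop : Continuous fun s =>
      G (τ a, s / ε) - periodAverage G (τ a)).intervalIntegrable _ _),
    hfrozen, sub_zero, add_sub_cancel_left, abs_of_pos hε, mul_assoc, ← sq] at this

end PeriodAverage

theorem abs_integral_add_nat_mul_le {h : ℝ → ℝ} (hh : Continuous h) {ε δ : ℝ}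
    (hper : ∀ a, |∫ s in a..a + ε, h s| ≤ δ) (a : ℝ) (n : ℕ) :
    |∫ s in a..a + n * ε, h s| ≤ n * δ := by
  induction n with
  | zero => simp
  | succ n ih =>
    simp only [Nat.cast_succ, add_one_mul]
    rw [← add_assoc, ← integral_add_adjacent_intervals (hh.intervalIntegrable _ _)
      (hh.intervalIntegrable _ _)]
    exact (abs_add_le _ _).trans (add_le_add ih (hper _))

theorem abs_integral_le_of_abs_integral_period_le {h : ℝ → ℝ} (hh : Continuous h)
    {ε δ M : ℝ} (hε : 0 < ε) (hper : ∀ a, |∫ s in a..a + ε, h s| ≤ δ) (hM : ∀ s, |h s| ≤ M)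
    (a x : ℝ) : |∫ s in a..x, h s| ≤ |x - a| / ε * δ + M * ε := by
  wlog hax : a ≤ x generalizing a x
  · rw [integral_symm, abs_neg, abs_sub_comm]
    exact this x a (by linarith)
  set n := ⌊(x - a) / ε⌋₊
  have hn : n * ε ≤ x - a := (le_div_iff₀ hε).1 (Nat.floor_le (div_nonneg (sub_nonneg.2 hax) hε.le))
  have hn' : x - a < n * ε + ε := by
    rw [← add_one_mul, ← div_lt_iff₀ hε]; exact Nat.lt_floor_add_one _
  have htail : |∫ s in a + n * ε..x, h s| ≤ M * ε := by
    have hM0 : 0 ≤ M := (abs_nonneg _).trans (hM 0)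
    calc _ ≤ M * |x - (a + n * ε)| :=
        norm_integral_le_of_norm_le_const fun s _ => (Real.norm_eq_abs _).trans_le (hM s)
      _ ≤ M * ε := by gcongr; rw [abs_le]; constructor <;> linarith
  rw [← integral_add_adjacent_intervals (hh.intervalIntegrable a (a + n * ε))
    (hh.intervalIntegrable _ x)]
  calc _ ≤ _ := abs_add_le _ _
    _ ≤ n * δ + M * ε := add_le_add (abs_integral_add_nat_mul_le hh hper a n) htail
    _ ≤ |x - a| / ε * δ + M * ε := by
      have hδ : 0 ≤ δ := (abs_nonneg _).trans (hper 0)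
      gcongr
      rw [abs_of_nonneg (sub_nonneg.2 hax), le_div_iff₀ hε]
      exact hn

theorem abs_integral_sub_periodAverage_le {G : ℝ × ℝ → ℝ} {L K : ℝ≥0} (hG : Continuous G)
    (hGt : ∀ η, LipschitzWith L fun t => G (t, η)) (hper : ∀ t η, G (t, η + 1) = G (t, η))
    {m M : ℝ} (hm : ∀ q, m ≤ G q) (hM : ∀ q, G q ≤ M) {τ : ℝ → ℝ} (hτ : LipschitzWith K τ)
    {ε : ℝ} (hε : 0 < ε) (a x : ℝ) :
    |∫ s in a..x, (G (τ s, s / ε) - periodAverage G (τ s))| ≤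
      (2 * L * K * |x - a| + (M - m)) * ε := by
  have hτc := hτ.continuous
  have hGbarc := (lipschitzWith_periodAverage hG hGt).continuous
  have hspread : ∀ s, |G (τ s, s / ε) - periodAverage G (τ s)| ≤ M - m := fun s => abs_sub_le_iff.2
    ⟨by linarith [hM (τ s, s / ε), le_periodAverage hG hm (τ s)],
     by linarith [hm (τ s, s / ε), periodAverage_le hG hM (τ s)]⟩
  calc _ ≤ |x - a| / ε * (2 * L * K * ε ^ 2) + (M - m) * ε :=
        abs_integral_le_of_abs_integral_period_le (by fun_prop) hε
          (abs_integral_sub_periodAverage_period_le hG hGt hper hτ hε) hspread a x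
    _ = _ := by field_simp

theorem exists_inverse_of_hasDerivAt {f f' : ℝ → ℝ} {c : ℝ} (hc : 0 < c)
    (hf : ∀ t, HasDerivAt f (f' t) t) (hf' : ∀ t, c⁻¹ ≤ f' t) :
    ∃ τ : ℝ → ℝ, Function.RightInverse τ f ∧ Function.LeftInverse τ f ∧
      LipschitzWith (Real.toNNReal c) τ ∧ ∀ x, HasDerivAt τ (f' (τ x))⁻¹ x := by
  have hdiff : Differentiable ℝ f := fun t => (hf t).differentiableAt
  have hgrowth : ∀ ⦃x y⦄, x ≤ y → c⁻¹ * (y - x) ≤ f y - f x :=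
    mul_sub_le_image_sub_of_le_deriv hdiff fun t => (hf t).deriv ▸ hf' t
  have hc' := inv_pos.2 hc
  have hmono : StrictMono f := fun x y hxy => by
    nlinarith [hgrowth hxy.le, mul_pos hc' (sub_pos.2 hxy)]
  have hsurj : Function.Surjective f := by
    refine hdiff.continuous.surjective ?_ ?_
    · refine tendsto_atTop_mono' _ ?_ (tendsto_atTop_add_const_left _ (f 0)
        (tendsto_id.const_mul_atTop hc'))
      filter_upwards [eventually_ge_atTop 0] with x hx
      simp only [id]
      linarith [hgrowth hx]
    · refine tendsto_atBot_mono' _ ?_ (tendsto_atBot_add_const_left _ (f 0)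
        (tendsto_id.const_mul_atBot hc'))
      filter_upwards [eventually_le_atBot 0] with x hx
      simp only [id]
      linarith [hgrowth hx]
  have hright : Function.RightInverse (Function.invFun f) f := Function.rightInverse_invFun hsurj
  have hlip : LipschitzWith (Real.toNNReal c) (Function.invFun f) := by
    refine LipschitzWith.of_dist_le_mul fun x y => ?_
    rw [Real.coe_toNNReal _ hc.le, ← inv_mul_le_iff₀ hc, Real.dist_eq, Real.dist_eq]
    set a := Function.invFun f x
    set b := Function.invFun f y
    rw [← hright x, ← hright y]
    rcases le_total a b with hab | hab
    · rw [abs_sub_comm, abs_sub_comm (f a), abs_of_nonneg (sub_nonneg.2 hab),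
        abs_of_nonneg (sub_nonneg.2 (hmono.monotone hab))]
      exact hgrowth hab
    · rw [abs_of_nonneg (sub_nonneg.2 hab), abs_of_nonneg (sub_nonneg.2 (hmono.monotone hab))]
      exact hgrowth hab
  refine ⟨Function.invFun f, hright, Function.leftInverse_invFun hmono.injective, hlip,
    fun x => ?_⟩
  exact (hf _).of_local_left_inverse hlip.continuous.continuousAt
    (hc'.trans_le (hf' _)).ne' (Eventually.of_forall hright)

noncomputable def homogenizedSolution (G : ℝ × ℝ → ℝ) (p t : ℝ) : ℝ :=
  p + ∫ s in (0:ℝ)..t, (periodAverage G s)⁻¹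

section HomogenizedSolution

variable {G : ℝ × ℝ → ℝ} {L : ℝ≥0} {m : ℝ}

theorem continuous_inv_periodAverage (hG : Continuous G)
    (hGt : ∀ η, LipschitzWith L fun t => G (t, η)) (hm0 : 0 < m) (hm : ∀ q, m ≤ G q) :
    Continuous fun t => (periodAverage G t)⁻¹ :=
  (lipschitzWith_periodAverage hG hGt).continuous.inv₀ fun t =>
    (hm0.trans_le (le_periodAverage hG hm t)).ne'

theorem hasDerivAt_homogenizedSolution (hG : Continuous G)
    (hGt : ∀ η, LipschitzWith L fun t => G (t, η)) (hm0 : 0 < m) (hm : ∀ q, m ≤ G q) (p t : ℝ) :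
    HasDerivAt (homogenizedSolution G p) (periodAverage G t)⁻¹ t :=
  ((continuous_inv_periodAverage hG hGt hm0 hm).integral_hasStrictDerivAt 0 t).hasDerivAt.const_add
    p

theorem lipschitzWith_homogenizedSolution (hG : Continuous G)
    (hGt : ∀ η, LipschitzWith L fun t => G (t, η)) (hm0 : 0 < m) (hm : ∀ q, m ≤ G q) (p : ℝ) :
    LipschitzWith (Real.toNNReal m⁻¹) (homogenizedSolution G p) := by
  refine LipschitzWith.of_dist_le_mul fun s t => ?_
  have hcont := continuous_inv_periodAverage hG hGt hm0 hm
  rw [Real.coe_toNNReal _ (inv_pos.2 hm0).le, dist_eq_norm, dist_eq_norm, homogenizedSolution,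
    homogenizedSolution, add_sub_add_left_eq_sub, integral_interval_sub_left
      (hcont.intervalIntegrable _ _) (hcont.intervalIntegrable _ _)]
  refine norm_integral_le_of_norm_le_const fun x _ => ?_
  have hGbar := le_periodAverage hG hm x
  rw [norm_inv, Real.norm_eq_abs, abs_of_pos (hm0.trans_le hGbar)]
  exact inv_anti₀ hm0 hGbar

theorem exists_inverse_homogenizedSolution (hG : Continuous G)
    (hGt : ∀ η, LipschitzWith L fun t => G (t, η)) (hm0 : 0 < m) (hm : ∀ q, m ≤ G q) {M : ℝ}
    (hM : ∀ q, G q ≤ M) (p : ℝ) :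
    ∃ τ : ℝ → ℝ, Function.RightInverse τ (homogenizedSolution G p) ∧
      LipschitzWith (Real.toNNReal M) τ ∧ ∀ x, τ x = ∫ y in p..x, periodAverage G (τ y) := by
  have hM0 : 0 < M := hm0.trans_le ((hm 0).trans (hM 0))
  obtain ⟨τ, hright, hleft, hlip, hderiv⟩ := exists_inverse_of_hasDerivAt hM0
    (hasDerivAt_homogenizedSolution hG hGt hm0 hm p)
    fun t => inv_anti₀ (hm0.trans_le (le_periodAverage hG hm t)) (periodAverage_le hG hM t)
  have hτp : τ p = 0 := by simpa [homogenizedSolution] using hleft 0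
  refine ⟨τ, hright, hlip, fun x => ?_⟩
  simp only [inv_inv] at hderiv
  rw [integral_eq_sub_of_hasDerivAt (fun y _ => hderiv y)
    (((lipschitzWith_periodAverage hG hGt).continuous.comp hlip.continuous).intervalIntegrable _ _),
    hτp, sub_zero]

end HomogenizedSolution

theorem gronwallBound_zero_mul (K δ x : ℝ) :
    gronwallBound 0 K (K * δ) x = δ * (exp (K * x) - 1) := by
  by_cases hK : K = 0
  · simp [gronwallBound_K0, hK]
  · rw [gronwallBound_of_K_ne_0 hK]
    field_simp
    ring

theorem abs_comp_sub_le_of_abs_integral_sub_le {F : ℝ × ℝ → ℝ} {L : ℝ≥0} {lam T δ : ℝ}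
    {τ X : ℝ → ℝ} (hF : Continuous F) (hFt : ∀ x, LipschitzWith L fun t => F (t, x))
    (hlam : 0 < lam) (hFlb : ∀ q, lam ≤ F q) (hτ : Continuous τ)
    (hX : ∀ t ∈ Icc 0 T, HasDerivAt X (1 / F (t, X t)) t)
    (hnear : ∀ t ∈ Icc 0 T, |(∫ y in X 0..X t, F (τ y, y)) - τ (X t)| ≤ δ) :
    ∀ t ∈ Icc 0 T, |τ (X t) - t| ≤ δ * exp (L / lam * t) := by
  set u : ℝ → ℝ := fun s => (∫ y in X 0..X s, F (τ y, y)) - s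
  have hu : ∀ s ∈ Icc 0 T, HasDerivAt u (F (τ (X s), X s) * (1 / F (s, X s)) - 1) s :=
    fun s hs => ((((by fun_prop : Continuous fun y => F (τ y, y)).integral_hasStrictDerivAt
      (X 0) (X s)).hasDerivAt).comp s (hX s hs)).sub (hasDerivAt_id s)
  have hgap : ∀ s ∈ Icc 0 T, |τ (X s) - s| ≤ |u s| + δ := fun s hs => by
    calc |τ (X s) - s| = |u s - ((∫ y in X 0..X s, F (τ y, y)) - τ (X s))| := by
          simp only [u]; ring_nf
      _ ≤ |u s| + δ := (abs_sub _ _).trans (add_le_add le_rfl (hnear s hs))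
  have hbound : ∀ s ∈ Ico 0 T, ‖F (τ (X s), X s) * (1 / F (s, X s)) - 1‖ ≤
      L / lam * ‖u s‖ + L / lam * δ := by
    intro s hs
    have hFpos : 0 < F (s, X s) := hlam.trans_le (hFlb _)
    have hlip := (hFt (X s)).dist_le_mul (τ (X s)) s
    rw [Real.dist_eq, Real.dist_eq] at hlip
    calc ‖F (τ (X s), X s) * (1 / F (s, X s)) - 1‖
        = |F (τ (X s), X s) - F (s, X s)| / F (s, X s) := by
          rw [Real.norm_eq_abs, ← abs_of_pos hFpos, ← abs_div, abs_of_pos hFpos]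
          congr 1; field_simp
      _ ≤ L * |τ (X s) - s| / lam := div_le_div₀ (by positivity) hlip hlam (hFlb _)
      _ ≤ L * (|u s| + δ) / lam := by gcongr; exact hgap s (Ico_subset_Icc_self hs)
      _ = _ := by rw [Real.norm_eq_abs]; ring
  intro t ht
  have hgron := norm_le_gronwallBound_of_norm_deriv_right_le (δ := 0)
    (fun s hs => (hu s hs).continuousAt.continuousWithinAt)
    (fun s hs => (hu s (Ico_subset_Icc_self hs)).hasDerivWithinAt) (by simp [u]) hbound t ht
  rw [sub_zero, gronwallBound_zero_mul, Real.norm_eq_abs] at hgron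
  linarith [hgap t ht]

theorem abs_sub_homogenizedSolution_le {G : ℝ × ℝ → ℝ} {L : ℝ≥0} {m M : ℝ} (hG : Continuous G)
    (hGt : ∀ η, LipschitzWith L fun t => G (t, η)) (hper : ∀ t η, G (t, η + 1) = G (t, η))
    (hm0 : 0 < m) (hm : ∀ q, m ≤ G q) (hM : ∀ q, G q ≤ M) {p T ε : ℝ} {X : ℝ → ℝ}
    (hε : 0 < ε) (hX0 : X 0 = p) (hX : ∀ t ∈ Icc 0 T, HasDerivAt X (1 / G (t, X t / ε)) t) :
    ∀ t ∈ Icc 0 T, |X t - homogenizedSolution G p t| ≤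
      m⁻¹ * ((2 * L * M * (m⁻¹ * T) + M) * exp (L / m * T)) * ε := by
  obtain ⟨τ, hτX0, hτlip, hτint⟩ := exists_inverse_homogenizedSolution hG hGt hm0 hm hM p
  have hM0 : 0 ≤ M := hm0.le.trans ((hm 0).trans (hM 0))
  have hτc := hτlip.continuous
  have hGbarc := (lipschitzWith_periodAverage hG hGt).continuous
  have hrange : ∀ s ∈ Icc 0 T, |X s - p| ≤ m⁻¹ * T := fun s hs => by
    have := (convex_Icc 0 T).norm_image_sub_le_of_norm_hasDerivWithin_le
      (fun x hx => (hX x hx).hasDerivWithinAt) (fun x _ => by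
        rw [norm_div, norm_one, Real.norm_eq_abs, abs_of_pos (hm0.trans_le (hm _)), one_div]
        exact inv_anti₀ hm0 (hm _)) (left_mem_Icc.2 (hs.1.trans hs.2)) hs
    rw [hX0, Real.norm_eq_abs, Real.norm_eq_abs, sub_zero, abs_of_nonneg hs.1] at this
    exact this.trans (by gcongr; exact hs.2)
  have hnear : ∀ s ∈ Icc 0 T, |(∫ y in X 0..X s, G (τ y, y / ε)) - τ (X s)| ≤
      (2 * L * M * (m⁻¹ * T) + M) * ε := fun s hs => by
    rw [hX0, hτint (X s), ← integral_sub ((by fun_prop : Continuous fun y =>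
      G (τ y, y / ε)).intervalIntegrable _ _) ((by fun_prop : Continuous fun y =>
      periodAverage G (τ y)).intervalIntegrable _ _)]
    refine (abs_integral_sub_periodAverage_le hG hGt hper hm hM hτlip hε p (X s)).trans ?_
    rw [Real.coe_toNNReal _ hM0]
    gcongr
    · exact hrange s hs
    · linarith
  intro t ht
  have hcomp := abs_comp_sub_le_of_abs_integral_sub_le (F := fun q => G (q.1, q.2 / ε))
    (by fun_prop) (fun x => hGt (x / ε)) hm0 (fun q => hm _) hτc hX hnear t ht
  calc |X t - homogenizedSolution G p t|
      = |homogenizedSolution G p (τ (X t)) - homogenizedSolution G p t| := by rw [hτX0]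
    _ ≤ m⁻¹ * |τ (X t) - t| := by
      simpa [Real.coe_toNNReal _ (inv_pos.2 hm0).le, Real.dist_eq] using
        (lipschitzWith_homogenizedSolution hG hGt hm0 hm p).dist_le_mul (τ (X t)) t
    _ ≤ m⁻¹ * ((2 * L * M * (m⁻¹ * T) + M) * ε * exp (L / m * t)) := by gcongr
    _ ≤ _ := by
      rw [mul_right_comm _ ε, ← mul_assoc]
      have : 0 ≤ 2 * L * M * (m⁻¹ * T) + M := add_nonneg
        (mul_nonneg (by positivity) (mul_nonneg (inv_pos.2 hm0).le (ht.1.trans ht.2))) hM0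
      gcongr
      exact ht.2

/-- Theorem 1, first part: one-dimensional homogenization of
`dX^ε/dt = 1/G(t, X^ε/ε)` with `G` Lipschitz, bounded between `λ` and `1/λ`, and
1-periodic in the oscillating variable: the solutions converge, uniformly on `[0,T]`
and with rate `O(ε)`, to a Lipschitz function `X⁰`. -/
theorem stmt_0
    (lam : ℝ) (hlam : 0 < lam)
    (G : ℝ × ℝ → ℝ)
    (hGlip : ∃ L : NNReal, LipschitzWith L G)
    (hGlb : ∀ q : ℝ × ℝ, lam ≤ G q)
    (hGub : ∀ q : ℝ × ℝ, G q ≤ 1 / lam)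
    (hGper : ∀ t η : ℝ, G (t, η + 1) = G (t, η))
    (p T : ℝ) (hT : 0 < T)
    (X : ℝ → ℝ → ℝ)
    (hXinit : ∀ ε ∈ Ioc (0:ℝ) 1, X ε 0 = p)
    (hXode : ∀ ε ∈ Ioc (0:ℝ) 1, ∀ t ∈ Icc (0:ℝ) T,
      HasDerivAt (X ε) (1 / G (t, X ε t / ε)) t) :
    ∃ (X0 : ℝ → ℝ) (K : NNReal), LipschitzOnWith K X0 (Icc (0:ℝ) T) ∧
      ∃ C > (0:ℝ), ∀ ε ∈ Ioc (0:ℝ) 1, ∀ t ∈ Icc (0:ℝ) T,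
        |X ε t - X0 t| ≤ C * ε := by
  obtain ⟨L, hGL⟩ := hGlip
  have hG := hGL.continuous
  have hGt : ∀ η, LipschitzWith L fun t => G (t, η) := fun η => by
    simpa [Function.comp_def] using hGL.comp (LipschitzWith.prodMk_right η)
  have hGub' : ∀ q, G q ≤ lam⁻¹ := fun q => (hGub q).trans_eq (one_div lam)
  have hC : 0 < lam⁻¹ * ((2 * L * lam⁻¹ * (lam⁻¹ * T) + lam⁻¹) * exp (L / lam * T)) := by
    have hl := inv_pos.2 hlam
    exact mul_pos hl (mul_pos (add_pos_of_nonneg_of_pos (mul_nonneg (by positivity)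
      (mul_nonneg hl.le hT.le)) hl) (exp_pos _))
  exact ⟨homogenizedSolution G p, _,
    (lipschitzWith_homogenizedSolution hG hGt hlam hGlb p).lipschitzOnWith, _, hC,
    fun ε hε => abs_sub_homogenizedSolution_le hG hGt hGper hlam hGlb hGub' hε.1 (hXinit ε hε)
      (hXode ε hε)⟩
end

section
/- Let λ > 0 and let G : ℝ → ℝ be Lipschitz continuous, 1-periodic, with G(η) ≥ λ for all η. Fix p ∈ ℝ and T > 0. For each ε ∈ (0,1] let X^ε : [0,T] → ℝ solve dX^ε/dt = 1/G(X^ε(t)/ε), X^ε(0) = p. Set M = ∫₀¹ G(η) dη. Then there exists a constant C > 0 (independent of ε) such that sup_{t∈[0,T]} |X^ε(t) − (p + t/M)| ≤ C ε for all ε ∈ (0,1]. In particular, the limit X⁰(t) = lim_{ε→0} X^ε(t) is the linear function p + t/M, whose slope is the harmonic mean of the velocity field F = 1/G. -/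
/-!
Let `Φ(x) = ∫₀ˣ G`. Along a solution, `d/dt [ε Φ(X^ε(t)/ε)] = G(X^ε/ε) · (1/G(X^ε/ε)) = 1`, so
`ε Φ(X^ε(t)/ε) = ε Φ(p/ε) + t`. Periodicity makes `r(x) = Φ(x) - M x` periodic, hence bounded by
some `B`; substituting `Φ = M x + r` gives `M (X^ε(t) - p) = t + ε (r(p/ε) - r(X^ε(t)/ε))`, so
`|X^ε(t) - (p + t/M)| ≤ 2Bε/M`.
-/

open Set

namespace Function.Periodic

/-- Scaled by the period to avoid dividing by it. -/
theorem periodic_mul_integral_sub_mul_integral {G : ℝ → ℝ} {c : ℝ} (hG : Periodic G c)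
    (hint : ∀ a b, IntervalIntegrable G MeasureTheory.volume a b) :
    Periodic (fun x ↦ c * (∫ η in (0 : ℝ)..x, G η) - x * ∫ η in (0 : ℝ)..c, G η) c := by
  intro x
  simp only [hG.intervalIntegral_add_eq_add 0 x hint, zero_add]
  ring

theorem exists_forall_abs_le_of_continuous {f : ℝ → ℝ} {c : ℝ} (hf : Periodic f c) (hc : c ≠ 0)
    (hcont : Continuous f) : ∃ B > 0, ∀ x, |f x| ≤ B := by
  obtain ⟨B, hB, hfB⟩ := (hf.isBounded_of_continuous hc hcont).exists_pos_norm_le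
  exact ⟨B, hB, fun x ↦ hfB _ (mem_range_self x)⟩

end Function.Periodic

theorem mul_comp_div_sub_eq_of_hasDerivAt {Φ G X : ℝ → ℝ} {ε T : ℝ} (hε : ε ≠ 0)
    (hΦ : ∀ x, HasDerivAt Φ (G x) x) (hG : ∀ x, G x ≠ 0)
    (hX : ∀ t ∈ Icc 0 T, HasDerivAt X (1 / G (X t / ε)) t) :
    ∀ t ∈ Icc 0 T, ε * Φ (X t / ε) - t = ε * Φ (X 0 / ε) := by
  have hderiv : ∀ t ∈ Icc 0 T, HasDerivAt (fun s ↦ ε * Φ (X s / ε) - s) 0 t := by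
    intro t ht
    refine ((((hΦ _).comp t ((hX t ht).div_const ε)).const_mul ε).sub
      (hasDerivAt_id t)).congr_deriv ?_
    field_simp [hG (X t / ε)]
    ring
  intro t ht
  simpa using constant_of_has_deriv_right_zero
    (fun s hs ↦ (hderiv s hs).continuousAt.continuousWithinAt)
    (fun s hs ↦ (hderiv s (Ico_subset_Icc_self hs)).hasDerivWithinAt) t ht

theorem abs_sub_add_div_le_of_eq_mul_add {r : ℝ → ℝ} {M B ε x p t : ℝ} (hM : 0 < M)
    (hε : 0 < ε) (hr : ∀ y, |r y| ≤ B)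
    (h : ε * (x / ε * M + r (x / ε)) - t = ε * (p / ε * M + r (p / ε))) :
    |x - (p + t / M)| ≤ 2 * B / M * ε := by
  have hident : x - (p + t / M) = ε * (r (p / ε) - r (x / ε)) / M := by
    field_simp at h ⊢
    linarith
  rw [hident, abs_div, abs_of_pos hM, abs_mul, abs_of_pos hε, div_le_iff₀ hM]
  calc ε * |r (p / ε) - r (x / ε)| ≤ ε * (B + B) :=
        mul_le_mul_of_nonneg_left ((abs_sub _ _).trans (add_le_add (hr _) (hr _))) hε.le
    _ = 2 * B / M * ε * M := by field_simp; ring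

theorem stmt_1_general
    (lam : ℝ) (hlam : 0 < lam)
    (G : ℝ → ℝ)
    (hGlip : ∃ L : NNReal, LipschitzWith L G)
    (hGper : ∀ η : ℝ, G (η + 1) = G η)
    (hGlb : ∀ η : ℝ, lam ≤ G η)
    (p T : ℝ)
    (X : ℝ → ℝ → ℝ)
    (hXinit : ∀ ε ∈ Ioc (0:ℝ) 1, X ε 0 = p)
    (hXode : ∀ ε ∈ Ioc (0:ℝ) 1, ∀ t ∈ Icc (0:ℝ) T,
      HasDerivAt (X ε) (1 / G (X ε t / ε)) t)
    (M : ℝ) (hM : M = ∫ η in (0:ℝ)..1, G η) :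
    ∃ C > (0:ℝ), ∀ ε ∈ Ioc (0:ℝ) 1, ∀ t ∈ Icc (0:ℝ) T,
      |X ε t - (p + t / M)| ≤ C * ε := by
  obtain ⟨L, hL⟩ := hGlip
  have hGpos : ∀ η, 0 < G η := fun η ↦ hlam.trans_le (hGlb η)
  have hint : ∀ a b, IntervalIntegrable G MeasureTheory.volume a b :=
    hL.continuous.intervalIntegrable
  have hMpos : 0 < M :=
    hM ▸ intervalIntegral.intervalIntegral_pos_of_pos (hint 0 1) hGpos one_pos
  set Φ : ℝ → ℝ := fun x ↦ ∫ η in (0:ℝ)..x, G η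
  set r : ℝ → ℝ := fun x ↦ Φ x - x * M
  have hr : Function.Periodic r 1 := by
    simpa only [one_mul, ← hM] using
      Function.Periodic.periodic_mul_integral_sub_mul_integral hGper hint
  obtain ⟨B, hB, hrB⟩ := hr.exists_forall_abs_le_of_continuous one_ne_zero
    ((intervalIntegral.continuous_primitive hint 0).sub (by fun_prop))
  refine ⟨2 * B / M, by positivity, fun ε hε t ht ↦ ?_⟩
  have hconst : ε * Φ (X ε t / ε) - t = ε * Φ (X ε 0 / ε) :=
    mul_comp_div_sub_eq_of_hasDerivAt hε.1.ne'
      (fun x ↦ (hL.continuous.integral_hasStrictDerivAt 0 x).hasDerivAt)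
      (fun x ↦ (hGpos x).ne') (hXode ε hε) t ht
  have hΦr : ∀ x, Φ x = x * M + r x := fun x ↦ by ring
  rw [hXinit ε hε, hΦr, hΦr] at hconst
  exact abs_sub_add_div_le_of_eq_mul_add hMpos hε.1 hrB hconst

/-- Theorem 1, second part: when the velocity `1/G` does not depend
on `t` and `G` is Lipschitz, `1`-periodic and bounded below by `λ > 0`, the solutions of
`dX^ε/dt = 1/G(X^ε/ε)`, `X^ε(0) = p`, converge uniformly on `[0,T]` with rate `O(ε)`
to the linear function `p + t/M`, where `M = ∫₀¹ G`. -/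
theorem stmt_1
    (lam : ℝ) (hlam : 0 < lam)
    (G : ℝ → ℝ)
    (hGlip : ∃ L : NNReal, LipschitzWith L G)
    (hGper : ∀ η : ℝ, G (η + 1) = G η)
    (hGlb : ∀ η : ℝ, lam ≤ G η)
    (p T : ℝ) (hT : 0 < T)
    (X : ℝ → ℝ → ℝ)
    (hXinit : ∀ ε ∈ Ioc (0:ℝ) 1, X ε 0 = p)
    (hXode : ∀ ε ∈ Ioc (0:ℝ) 1, ∀ t ∈ Icc (0:ℝ) T,
      HasDerivAt (X ε) (1 / G (X ε t / ε)) t)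
    (M : ℝ) (hM : M = ∫ η in (0:ℝ)..1, G η) :
    ∃ C > (0:ℝ), ∀ ε ∈ Ioc (0:ℝ) 1, ∀ t ∈ Icc (0:ℝ) T,
      |X ε t - (p + t / M)| ≤ C * ε :=
  stmt_1_general lam hlam G hGlip hGper hGlb p T X hXinit hXode M hM
end

section
/- Let a, h, σ > 0 and let F : ℝ → ℝ be the a-periodic 'sawtooth' function defined on one period by F(τ) = (2h/a)τ + σ for τ ∈ [0, a/2) and F(τ) = (2h/a)(a − τ) + σ for τ ∈ [a/2, a). Fix p ∈ ℝ and T > 0, and for each ε ∈ (0,1] let y^ε : [0,T] → ℝ solve dy^ε/dt = F(y^ε(t)/ε), y^ε(0) = p. Set β = (1/a) ∫₀^a dτ/F(τ). Then β = (1/h) log((h+σ)/σ), and y^ε converges uniformly on [0,T] as ε → 0 to the linear function y⁰(t) = p + t/β. -/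
/-!
Separating variables along a solution gives `ε ∫_{p/ε}^{y^ε(t)/ε} dτ / F(τ) = t`. Since `1/F`
is continuous and `a`-periodic, the corrector `∫₀^x dτ / F(τ) - β x` is periodic, hence bounded,
so `∫_u^v dτ / F(τ) = β (v - u) + O(1)` uniformly in `u, v`. Therefore
`t = β (y^ε(t) - p) + O(ε)`: the solutions converge uniformly to `p + t/β` at rate `O(ε)`.
For the sawtooth the two half periods are mirror images, and on each one `F` is affine, which
gives the value of `β`.
-/

open Set Filter Function Topology

theorem Function.Periodic.continuous_of_continuousOn_Icc {α : Type*} [TopologicalSpace α]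
    {f : ℝ → α} {c : ℝ} (hf : Periodic f c) (hc : 0 < c) (hcont : ContinuousOn f (Icc 0 c)) :
    Continuous f := by
  have := Fact.mk hc
  have hlift : Continuous (AddCircle.liftIco c 0 f) :=
    AddCircle.liftIco_zero_continuous (by simpa using (hf 0).symm) hcont
  refine (hlift.comp (AddCircle.continuous_mk' c)).congr fun x => ?_
  change f (toIcoMod hc 0 x) = f x
  rw [← self_sub_toIcoDiv_zsmul, hf.sub_zsmul_eq]

theorem Function.Periodic.exists_abs_intervalIntegral_sub_le {f : ℝ → ℝ} {c : ℝ}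
    (hf : Periodic f c) (hc : c ≠ 0) (hcont : Continuous f) :
    ∃ C, ∀ u v, |(∫ x in u..v, f x) - (v - u) / c * ∫ x in 0..c, f x| ≤ C := by
  have hint : ∀ u v, IntervalIntegrable f MeasureTheory.volume u v :=
    fun u v => hcont.intervalIntegrable u v
  set H : ℝ → ℝ := fun x => (∫ t in 0..x, f t) - x / c * ∫ t in 0..c, f t
  have hHper : Periodic H c := fun x => by
    simp only [H, hf.intervalIntegral_add_eq_add 0 x hint, zero_add]
    field_simp
    ring
  have hHcont : Continuous H := by
    have := intervalIntegral.continuous_primitive hint 0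
    fun_prop
  obtain ⟨C, hC⟩ := isBounded_iff_forall_norm_le.mp (hHper.isBounded_of_continuous hc hHcont)
  refine ⟨C + C, fun u v => ?_⟩
  have hsplit : (∫ x in u..v, f x) - (v - u) / c * ∫ x in 0..c, f x = H v - H u := by
    simp only [H, ← intervalIntegral.integral_interval_sub_left (hint 0 v) (hint 0 u)]
    ring
  rw [hsplit]
  exact (abs_sub _ _).trans (add_le_add (hC _ (mem_range_self v)) (hC _ (mem_range_self u)))

theorem tendstoUniformlyOn_nhdsWithin_zero_of_dist_le {α β : Type*} [PseudoMetricSpace β]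
    {F : ℝ → α → β} {f : α → β} {s : Set ℝ} {K : Set α} (C : ℝ)
    (h : ∀ ε ∈ s, ∀ x ∈ K, dist (f x) (F ε x) ≤ C * ε) :
    TendstoUniformlyOn F f (𝓝[s] 0) K := by
  rw [Metric.tendstoUniformlyOn_iff]
  intro δ hδ
  have hsmall : ∀ᶠ ε in 𝓝 (0 : ℝ), C * ε < δ := by
    have : Tendsto (fun ε : ℝ => C * ε) (𝓝 0) (𝓝 0) := by
      simpa using (continuous_const_mul C).tendsto (0 : ℝ)
    exact this.eventually (gt_mem_nhds hδ)
  filter_upwards [nhdsWithin_le_nhds hsmall, self_mem_nhdsWithin] with ε hεδ hε x hx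
  exact (h ε hε x hx).trans_lt hεδ

theorem mul_integral_one_div_eq_of_hasDerivAt {F : ℝ → ℝ} (hcont : Continuous F)
    (hne : ∀ x, F x ≠ 0) {ε T : ℝ} (hε : ε ≠ 0) {y : ℝ → ℝ}
    (hy : ∀ t ∈ Icc 0 T, HasDerivAt y (F (y t / ε)) t) :
    ∀ t ∈ Icc 0 T, ε * ∫ τ in (y 0 / ε)..(y t / ε), 1 / F τ = t := by
  have hinv : Continuous fun τ => 1 / F τ := continuous_const.div hcont hne
  set w : ℝ → ℝ := fun t => ε * (∫ τ in (y 0 / ε)..(y t / ε), 1 / F τ) - t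
  have hw : ∀ t ∈ Icc 0 T, HasDerivAt w 0 t := by
    intro t ht
    have hprim := (hinv.integral_hasStrictDerivAt (y 0 / ε) (y t / ε)).hasDerivAt
    have := ((hprim.comp t ((hy t ht).div_const ε)).const_mul ε).sub (hasDerivAt_id t)
    refine this.congr_deriv ?_
    field_simp [hne (y t / ε)]
    ring
  have hconst := constant_of_has_deriv_right_zero
    (fun t ht => (hw t ht).continuousAt.continuousWithinAt)
    (fun t ht => (hw t (Ico_subset_Icc_self ht)).hasDerivWithinAt)
  intro t ht
  have := hconst t ht
  simp only [w, intervalIntegral.integral_same] at this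
  linarith

theorem Function.Periodic.tendstoUniformlyOn_of_hasDerivAt_comp_div {F : ℝ → ℝ} {a : ℝ}
    (hper : Periodic F a) (ha : 0 < a) (hcont : Continuous F) (hpos : ∀ x, 0 < F x)
    {s : Set ℝ} (hs : s ⊆ Ioi 0) {p T : ℝ} {y : ℝ → ℝ → ℝ}
    (hinit : ∀ ε ∈ s, y ε 0 = p)
    (hode : ∀ ε ∈ s, ∀ t ∈ Icc 0 T, HasDerivAt (y ε) (F (y ε t / ε)) t) :
    TendstoUniformlyOn y (fun t => p + t / ((1 / a) * ∫ τ in 0..a, 1 / F τ)) (𝓝[s] 0)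
      (Icc 0 T) := by
  set β := (1 / a) * ∫ τ in 0..a, 1 / F τ
  have hinv : Continuous fun τ => 1 / F τ := continuous_const.div hcont fun x => (hpos x).ne'
  have hβ : 0 < β := mul_pos (by positivity) <|
    intervalIntegral.intervalIntegral_pos_of_pos_on (hinv.intervalIntegrable 0 a)
      (fun x _ => one_div_pos.mpr (hpos x)) ha
  obtain ⟨C, hC⟩ := (show Periodic (fun τ => 1 / F τ) a from fun τ => by simp [hper τ])
    |>.exists_abs_intervalIntegral_sub_le ha.ne' hinv
  refine tendstoUniformlyOn_nhdsWithin_zero_of_dist_le (C / β) fun ε hε t ht => ?_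
  have hε0 : 0 < ε := hs hε
  have hsep := mul_integral_one_div_eq_of_hasDerivAt hcont (fun x => (hpos x).ne') hε0.ne'
    (hode ε hε) t ht
  rw [hinit ε hε] at hsep
  have hbound := hC (p / ε) (y ε t / ε)
  have hdist : dist (p + t / β) (y ε t) = |t - β * (y ε t - p)| / β := by
    have : p + t / β - y ε t = (t - β * (y ε t - p)) / β := by
      field_simp
      ring
    rw [Real.dist_eq, this, abs_div, abs_of_pos hβ]
  have hkey : t - β * (y ε t - p) = ε * ((∫ τ in (p / ε)..(y ε t / ε), 1 / F τ) -
      (y ε t / ε - p / ε) / a * ∫ τ in 0..a, 1 / F τ) := by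
    calc t - β * (y ε t - p) = ε * (∫ τ in (p / ε)..(y ε t / ε), 1 / F τ) - β * (y ε t - p) := by
          rw [hsep]
      _ = _ := by
          simp only [β]
          field_simp
  rw [hdist, hkey, abs_mul, abs_of_pos hε0, div_le_iff₀ hβ]
  calc ε * _ ≤ ε * C := mul_le_mul_of_nonneg_left hbound hε0.le
    _ = C / β * ε * β := by field_simp

-- The profile of `F` on `[0, a]` as a single tent, which makes its continuity evident.
noncomputable def sawtooth (a h σ τ : ℝ) : ℝ := σ + h - 2 * h / a * |τ - a / 2|

section Sawtooth

variable {a h σ τ : ℝ}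

theorem continuous_sawtooth : Continuous (sawtooth a h σ) := by
  unfold sawtooth
  fun_prop

theorem sawtooth_of_le_half (ha : a ≠ 0) (hτ : τ ≤ a / 2) :
    sawtooth a h σ τ = 2 * h / a * τ + σ := by
  rw [sawtooth, abs_of_nonpos (by linarith)]
  field_simp
  ring

theorem sawtooth_of_half_le (ha : a ≠ 0) (hτ : a / 2 ≤ τ) :
    sawtooth a h σ τ = 2 * h / a * (a - τ) + σ := by
  rw [sawtooth, abs_of_nonneg (by linarith)]
  field_simp
  ring

theorem sawtooth_sub_left : sawtooth a h σ (a - τ) = sawtooth a h σ τ := by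
  rw [sawtooth, sawtooth, ← abs_neg]
  ring_nf

theorem le_sawtooth (ha : 0 < a) (hh : 0 ≤ h) (hτ : τ ∈ Icc 0 a) : σ ≤ sawtooth a h σ τ := by
  have hdev : |τ - a / 2| ≤ a / 2 := abs_le.mpr ⟨by linarith [hτ.1], by linarith [hτ.2]⟩
  have hpeak : 2 * h / a * (a / 2) = h := by field_simp
  have : 2 * h / a * |τ - a / 2| ≤ 2 * h / a * (a / 2) := by gcongr
  rw [sawtooth]
  linarith

theorem integral_one_div_sawtooth (ha : 0 < a) (hh : 0 < h) (hσ : 0 < σ) :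
    ∫ τ in 0..a, 1 / sawtooth a h σ τ = a / h * Real.log ((h + σ) / σ) := by
  have hint : IntervalIntegrable (fun τ => 1 / sawtooth a h σ τ) MeasureTheory.volume 0 a := by
    refine ContinuousOn.intervalIntegrable ?_
    refine continuousOn_const.div continuous_sawtooth.continuousOn fun τ hτ => ?_
    rw [uIcc_of_le ha.le] at hτ
    exact (hσ.trans_le (le_sawtooth ha hh.le hτ)).ne'
  have hhalf : a / 2 ∈ uIcc 0 a := by rw [uIcc_of_le ha.le]; constructor <;> linarith
  have hc : 2 * h / a ≠ 0 := by positivity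
  have hfirst : ∫ τ in 0..a / 2, 1 / sawtooth a h σ τ = a / (2 * h) * Real.log ((h + σ) / σ) := by
    calc ∫ τ in 0..a / 2, 1 / sawtooth a h σ τ
        = ∫ τ in 0..a / 2, 1 / (2 * h / a * τ + σ) := by
          refine intervalIntegral.integral_congr fun τ hτ => ?_
          rw [uIcc_of_le (by positivity)] at hτ
          simp only [sawtooth_of_le_half ha.ne' hτ.2]
      _ = (2 * h / a)⁻¹ * ∫ x in σ..h + σ, 1 / x := by
          rw [intervalIntegral.integral_comp_mul_add (fun x => 1 / x) hc, smul_eq_mul]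
          rw [mul_zero, zero_add, show 2 * h / a * (a / 2) = h by field_simp]
      _ = a / (2 * h) * Real.log ((h + σ) / σ) := by
          rw [integral_one_div_of_pos hσ (by positivity)]
          field_simp
  have hsecond :
      ∫ τ in a / 2..a, 1 / sawtooth a h σ τ = ∫ τ in 0..a / 2, 1 / sawtooth a h σ τ := by
    have := intervalIntegral.integral_comp_sub_left (fun τ => 1 / sawtooth a h σ τ) a
      (a := 0) (b := a / 2)
    simp only [sawtooth_sub_left, sub_zero, sub_half] at this
    exact this.symm
  rw [← intervalIntegral.integral_add_adjacent_intervals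
    (hint.mono_set (uIcc_subset_uIcc_left hhalf)) (hint.mono_set (uIcc_subset_uIcc_right hhalf)),
    hsecond, hfirst]
  field_simp
  ring

theorem eqOn_sawtooth {F : ℝ → ℝ} (ha : 0 < a)
    (hF1 : ∀ τ ∈ Ico (0:ℝ) (a / 2), F τ = 2 * h / a * τ + σ)
    (hF2 : ∀ τ ∈ Ico (a / 2) a, F τ = 2 * h / a * (a - τ) + σ)
    (hper : Periodic F a) : EqOn F (sawtooth a h σ) (Icc 0 a) := by
  rintro τ ⟨h0, ha'⟩
  rcases lt_or_ge τ (a / 2) with hlt | hge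
  · rw [hF1 τ ⟨h0, hlt⟩, sawtooth_of_le_half ha.ne' hlt.le]
  rcases ha'.lt_or_eq with hlt | hτa
  · rw [hF2 τ ⟨hge, hlt⟩, sawtooth_of_half_le ha.ne' hge]
  · have hFa : F a = F 0 := by simpa using hper 0
    rw [hτa, hFa, hF1 0 ⟨le_rfl, by positivity⟩, sawtooth_of_half_le ha.ne' (by linarith)]
    ring

end Sawtooth

theorem stmt_13_general
    (a h σ : ℝ) (ha : 0 < a) (hh : 0 < h) (hσ : 0 < σ)
    (F : ℝ → ℝ)
    (hF1 : ∀ τ ∈ Ico (0:ℝ) (a / 2), F τ = 2 * h / a * τ + σ)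
    (hF2 : ∀ τ ∈ Ico (a / 2) a, F τ = 2 * h / a * (a - τ) + σ)
    (hFper : ∀ τ : ℝ, F (τ + a) = F τ)
    (p T : ℝ)
    (y : ℝ → ℝ → ℝ)
    (hyinit : ∀ ε ∈ Ioc (0:ℝ) 1, y ε 0 = p)
    (hyode : ∀ ε ∈ Ioc (0:ℝ) 1, ∀ t ∈ Icc (0:ℝ) T,
      HasDerivAt (y ε) (F (y ε t / ε)) t)
    (β : ℝ) (hβ : β = (1 / a) * ∫ τ in (0:ℝ)..a, 1 / F τ) :
    β = (1 / h) * Real.log ((h + σ) / σ) ∧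
    TendstoUniformlyOn (fun ε t => y ε t) (fun t => p + t / β)
      (nhdsWithin 0 (Ioc (0:ℝ) 1)) (Icc (0:ℝ) T) := by
  have hper : Periodic F a := hFper
  have hsaw : EqOn F (sawtooth a h σ) (Icc 0 a) := eqOn_sawtooth ha hF1 hF2 hper
  have hcont : Continuous F :=
    hper.continuous_of_continuousOn_Icc ha (continuous_sawtooth.continuousOn.congr hsaw)
  have hpos : ∀ x, 0 < F x := fun x => by
    obtain ⟨r, hr, hFr⟩ := hper.exists_mem_Ico₀ ha x
    rw [hFr, hsaw (Ico_subset_Icc_self hr)]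
    exact hσ.trans_le (le_sawtooth ha hh.le (Ico_subset_Icc_self hr))
  subst hβ
  refine ⟨?_, hper.tendstoUniformlyOn_of_hasDerivAt_comp_div ha hcont hpos (fun ε hε => hε.1)
    hyinit hyode⟩
  have hint : ∫ τ in 0..a, 1 / F τ = ∫ τ in 0..a, 1 / sawtooth a h σ τ :=
    intervalIntegral.integral_congr fun τ hτ => by
      rw [uIcc_of_le ha.le] at hτ
      simp only [hsaw hτ]
  rw [hint, integral_one_div_sawtooth ha hh hσ]
  field_simp

/-- Example 2, sawtooth velocity: for the `a`-periodic sawtooth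
function `F` with `F(τ) = (2h/a)τ + σ` on `[0,a/2)` and `F(τ) = (2h/a)(a−τ) + σ` on
`[a/2,a)`, the harmonic-mean exponent `β = (1/a) ∫₀^a dτ/F(τ)` equals
`(1/h) log((h+σ)/σ)`, and the solutions of `dy^ε/dt = F(y^ε/ε)`, `y^ε(0) = p`,
converge uniformly on `[0,T]` as `ε → 0` to the linear function `y⁰(t) = p + t/β`. -/
theorem stmt_13
    (a h σ : ℝ) (ha : 0 < a) (hh : 0 < h) (hσ : 0 < σ)
    (F : ℝ → ℝ)
    (hF1 : ∀ τ ∈ Ico (0:ℝ) (a / 2), F τ = 2 * h / a * τ + σ)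
    (hF2 : ∀ τ ∈ Ico (a / 2) a, F τ = 2 * h / a * (a - τ) + σ)
    (hFper : ∀ τ : ℝ, F (τ + a) = F τ)
    (p T : ℝ) (hT : 0 < T)
    (y : ℝ → ℝ → ℝ)
    (hyinit : ∀ ε ∈ Ioc (0:ℝ) 1, y ε 0 = p)
    (hyode : ∀ ε ∈ Ioc (0:ℝ) 1, ∀ t ∈ Icc (0:ℝ) T,
      HasDerivAt (y ε) (F (y ε t / ε)) t)
    (β : ℝ) (hβ : β = (1 / a) * ∫ τ in (0:ℝ)..a, 1 / F τ) :
    β = (1 / h) * Real.log ((h + σ) / σ) ∧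
    TendstoUniformlyOn (fun ε t => y ε t) (fun t => p + t / β)
      (nhdsWithin 0 (Ioc (0:ℝ) 1)) (Icc (0:ℝ) T) :=
  stmt_13_general a h σ ha hh hσ F hF1 hF2 hFper p T y hyinit hyode β hβ
end

section
/- Define F : ℝ → ℝ by the series F(x) = Σ_{k=0}^∞ (2k+1)^{−2} sin(x/(2k+1)). Then the series converges absolutely and uniformly on ℝ, F is continuous and bounded, for every T ∈ ℝ one has ∫₀^T F(x) dx = Σ_{k=0}^∞ (2/(2k+1)) sin²(T/(2(2k+1))), and there exists a constant C > 0 such that |∫₀^T F(x) dx| ≤ C (1 + log(1+T)) for all T ≥ 0. -/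
/-!
Each term of the series is bounded by `(2k+1)⁻²`, which is summable; the Weierstrass M-test gives
absolute and uniform convergence, continuity and boundedness, and lets us integrate termwise.
The `k`-th term integrates to `b_k(T) = 2/(2k+1) · sin²(T/(2(2k+1)))`. For the growth, split the
series at `N = ⌈T⌉`: for `k < N` use `sin² ≤ 1`, giving at most `2 H_N ≤ 2(1 + log N)`; for
`k ≥ N` use `sin² θ ≤ θ`, giving at most `T Σ_{k ≥ N} (2k+1)⁻² ≤ 2T/(2N+1) ≤ 1`.
-/

open Set Filter

noncomputable def oddSineTerm (k : ℕ) (x : ℝ) : ℝ :=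
  ((2 * (k : ℝ) + 1) ^ 2)⁻¹ * Real.sin (x / (2 * (k : ℝ) + 1))

noncomputable def oddSineTermIntegral (T : ℝ) (k : ℕ) : ℝ :=
  2 / (2 * (k : ℝ) + 1) * Real.sin (T / (2 * (2 * (k : ℝ) + 1))) ^ 2

lemma summable_inv_two_mul_add_one_sq : Summable fun k : ℕ => ((2 * (k : ℝ) + 1) ^ 2)⁻¹ := by
  have h : Summable fun k : ℕ => (((k + 1 : ℕ) : ℝ) ^ 2)⁻¹ :=
    (summable_nat_add_iff 1).2 (Real.summable_nat_pow_inv.2 one_lt_two)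
  refine h.of_nonneg_of_le (fun k => by positivity) fun k => ?_
  push_cast
  gcongr
  linarith [k.cast_nonneg (α := ℝ)]

lemma integral_sin_div {c : ℝ} (hc : c ≠ 0) (T : ℝ) :
    ∫ x in (0 : ℝ)..T, Real.sin (x / c) = 2 * c * Real.sin (T / (2 * c)) ^ 2 := by
  have hcos : Real.cos (T / c) = 1 - 2 * Real.sin (T / (2 * c)) ^ 2 := by
    rw [show T / c = 2 * (T / (2 * c)) by field_simp, Real.cos_two_mul, Real.cos_sq']
    ring
  rw [intervalIntegral.integral_comp_div Real.sin hc, integral_sin, hcos, zero_div, Real.cos_zero,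
    smul_eq_mul]
  ring

lemma sin_sq_le_abs (x : ℝ) : Real.sin x ^ 2 ≤ |x| := by
  rw [sq, ← abs_mul_abs_self]
  exact (mul_le_of_le_one_left (abs_nonneg _) (Real.abs_sin_le_one x)).trans Real.abs_sin_le_abs

lemma sum_range_two_div_two_mul_add_one_le (N : ℕ) :
    ∑ k ∈ Finset.range N, 2 / (2 * (k : ℝ) + 1) ≤ 2 * (1 + Real.log N) := by
  calc ∑ k ∈ Finset.range N, 2 / (2 * (k : ℝ) + 1)
      ≤ ∑ k ∈ Finset.range N, 2 * ((k : ℝ) + 1)⁻¹ := by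
        gcongr with k
        rw [div_eq_mul_inv]
        gcongr
        linarith [k.cast_nonneg (α := ℝ)]
    _ = 2 * (harmonic N : ℝ) := by simp [harmonic, Finset.mul_sum]
    _ ≤ 2 * (1 + Real.log N) := by gcongr; exact harmonic_le_one_add_log N

-- `(2m+1)⁻² ≤ g m - g (m+1)` with `g m = 2/(2m+1)`, so the tail telescopes.
lemma tsum_inv_two_mul_add_one_sq_tail_le (N : ℕ) :
    ∑' k : ℕ, ((2 * ((k + N : ℕ) : ℝ) + 1) ^ 2)⁻¹ ≤ 2 / (2 * (N : ℝ) + 1) := by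
  set g : ℕ → ℝ := fun k => 2 / (2 * ((k + N : ℕ) : ℝ) + 1)
  have htele : ∀ k : ℕ, ((2 * ((k + N : ℕ) : ℝ) + 1) ^ 2)⁻¹ ≤ g k - g (k + 1) := by
    intro k
    have hm : (0 : ℝ) ≤ ((k + N : ℕ) : ℝ) := Nat.cast_nonneg _
    simp only [g]
    push_cast at hm ⊢
    rw [div_sub_div _ _ (by positivity) (by positivity), inv_eq_one_div,
      div_le_div_iff₀ (by positivity) (by positivity)]
    nlinarith
  refine Real.tsum_le_of_sum_range_le (fun k => by positivity) fun n => ?_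
  calc ∑ k ∈ Finset.range n, ((2 * ((k + N : ℕ) : ℝ) + 1) ^ 2)⁻¹
      ≤ ∑ k ∈ Finset.range n, (g k - g (k + 1)) := Finset.sum_le_sum fun k _ => htele k
    _ = g 0 - g n := Finset.sum_range_sub' g n
    _ ≤ g 0 := sub_le_self _ (by positivity)
    _ = 2 / (2 * (N : ℝ) + 1) := by simp [g]

lemma norm_oddSineTerm_le (k : ℕ) (x : ℝ) : ‖oddSineTerm k x‖ ≤ ((2 * (k : ℝ) + 1) ^ 2)⁻¹ := by
  unfold oddSineTerm
  rw [norm_mul, Real.norm_of_nonneg (by positivity)]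
  exact mul_le_of_le_one_right (by positivity) (Real.abs_sin_le_one _)

lemma continuous_oddSineTerm (k : ℕ) : Continuous (oddSineTerm k) := by
  unfold oddSineTerm
  fun_prop

lemma integral_oddSineTerm (T : ℝ) (k : ℕ) :
    ∫ x in (0 : ℝ)..T, oddSineTerm k x = oddSineTermIntegral T k := by
  have hc : (2 * (k : ℝ) + 1) ≠ 0 := by positivity
  unfold oddSineTerm oddSineTermIntegral
  rw [intervalIntegral.integral_const_mul, integral_sin_div hc]
  field_simp

lemma hasSum_oddSineTermIntegral (T : ℝ) :
    HasSum (oddSineTermIntegral T) (∫ x in (0 : ℝ)..T, ∑' k, oddSineTerm k x) := by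
  rw [← funext (integral_oddSineTerm T)]
  exact intervalIntegral.hasSum_integral_of_dominated_convergence
    (fun k _ => ((2 * (k : ℝ) + 1) ^ 2)⁻¹)
    (fun k => (continuous_oddSineTerm k).aestronglyMeasurable)
    (fun k => .of_forall fun x _ => norm_oddSineTerm_le k x)
    (.of_forall fun _ _ => summable_inv_two_mul_add_one_sq)
    intervalIntegrable_const
    (.of_forall fun x _ => (summable_inv_two_mul_add_one_sq.of_norm_bounded
      fun k => norm_oddSineTerm_le k x).hasSum)

lemma oddSineTermIntegral_nonneg (T : ℝ) (k : ℕ) : 0 ≤ oddSineTermIntegral T k := by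
  unfold oddSineTermIntegral
  positivity

lemma oddSineTermIntegral_le_two_div (T : ℝ) (k : ℕ) :
    oddSineTermIntegral T k ≤ 2 / (2 * (k : ℝ) + 1) :=
  mul_le_of_le_one_right (by positivity) (Real.sin_sq_le_one _)

lemma oddSineTermIntegral_le_abs_mul (T : ℝ) (k : ℕ) :
    oddSineTermIntegral T k ≤ |T| * ((2 * (k : ℝ) + 1) ^ 2)⁻¹ := by
  calc oddSineTermIntegral T k ≤ 2 / (2 * (k : ℝ) + 1) * |T / (2 * (2 * (k : ℝ) + 1))| :=
        mul_le_mul_of_nonneg_left (sin_sq_le_abs _) (by positivity)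
    _ = |T| * ((2 * (k : ℝ) + 1) ^ 2)⁻¹ := by
        rw [abs_div, abs_of_pos (by positivity : (0 : ℝ) < 2 * (2 * (k : ℝ) + 1))]
        field_simp

lemma tsum_oddSineTermIntegral_le {T : ℝ} (hT : 0 ≤ T) :
    ∑' k, oddSineTermIntegral T k ≤ 3 * (1 + Real.log (1 + T)) := by
  set N := ⌈T⌉₊
  have hsum := (hasSum_oddSineTermIntegral T).summable
  have hlog : Real.log N ≤ Real.log (1 + T) := by
    rcases N.eq_zero_or_pos with hN | hN
    · simp [hN, Real.log_nonneg (by linarith : (1 : ℝ) ≤ 1 + T)]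
    · exact Real.log_le_log (by exact_mod_cast hN) (by linarith [Nat.ceil_lt_add_one hT])
  have hhead : ∑ k ∈ Finset.range N, oddSineTermIntegral T k ≤ 2 * (1 + Real.log (1 + T)) :=
    calc ∑ k ∈ Finset.range N, oddSineTermIntegral T k
        ≤ ∑ k ∈ Finset.range N, 2 / (2 * (k : ℝ) + 1) :=
          Finset.sum_le_sum fun k _ => oddSineTermIntegral_le_two_div T k
      _ ≤ 2 * (1 + Real.log N) := sum_range_two_div_two_mul_add_one_le N
      _ ≤ 2 * (1 + Real.log (1 + T)) := by gcongr
  have htail : ∑' k, oddSineTermIntegral T (k + N) ≤ 1 :=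
    calc ∑' k, oddSineTermIntegral T (k + N)
        ≤ ∑' k : ℕ, T * ((2 * ((k + N : ℕ) : ℝ) + 1) ^ 2)⁻¹ := by
          refine ((summable_nat_add_iff N).2 hsum).tsum_le_tsum (fun k => ?_)
            (((summable_nat_add_iff N).2 summable_inv_two_mul_add_one_sq).mul_left T)
          simpa only [abs_of_nonneg hT] using oddSineTermIntegral_le_abs_mul T (k + N)
      _ ≤ T * (2 / (2 * (N : ℝ) + 1)) := by
          rw [tsum_mul_left]
          exact mul_le_mul_of_nonneg_left (tsum_inv_two_mul_add_one_sq_tail_le N) hT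
      _ ≤ 1 := by
          rw [mul_div_assoc', div_le_one (by positivity)]
          linarith [Nat.le_ceil T]
  rw [← hsum.sum_add_tsum_nat_add N]
  linarith [Real.log_nonneg (by linarith : (1 : ℝ) ≤ 1 + T)]

/-- Example 3, almost periodic velocity: the series
`F(x) = Σ_{k≥0} (2k+1)⁻² sin(x/(2k+1))` converges absolutely and uniformly on `ℝ`,
`F` is continuous and bounded, `∫₀^T F = Σ_{k≥0} (2/(2k+1)) sin²(T/(2(2k+1)))` for
every `T`, and the primitive grows at most logarithmically:
`|∫₀^T F| ≤ C (1 + log(1+T))` for all `T ≥ 0`. -/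
theorem stmt_14
    (F : ℝ → ℝ)
    (hF : ∀ x : ℝ, F x = ∑' k : ℕ,
      ((2 * (k : ℝ) + 1) ^ 2)⁻¹ * Real.sin (x / (2 * (k : ℝ) + 1))) :
    (∀ x : ℝ, Summable fun k : ℕ =>
      |((2 * (k : ℝ) + 1) ^ 2)⁻¹ * Real.sin (x / (2 * (k : ℝ) + 1))|) ∧
    TendstoUniformly (fun (n : ℕ) (x : ℝ) =>
        ∑ k ∈ Finset.range n, ((2 * (k : ℝ) + 1) ^ 2)⁻¹ * Real.sin (x / (2 * (k : ℝ) + 1)))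
      F atTop ∧
    Continuous F ∧
    (∃ M : ℝ, ∀ x : ℝ, |F x| ≤ M) ∧
    (∀ T : ℝ, (∫ x in (0:ℝ)..T, F x)
        = ∑' k : ℕ, (2 / (2 * (k : ℝ) + 1)) * Real.sin (T / (2 * (2 * (k : ℝ) + 1))) ^ 2) ∧
    (∃ C > (0:ℝ), ∀ T : ℝ, 0 ≤ T →
      |∫ x in (0:ℝ)..T, F x| ≤ C * (1 + Real.log (1 + T))) := by
  have hu := summable_inv_two_mul_add_one_sq
  have hFeq : F = fun x => ∑' k, oddSineTerm k x := funext hF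
  have hunif : TendstoUniformly (fun n x => ∑ k ∈ Finset.range n, oddSineTerm k x) F atTop :=
    hFeq ▸ tendstoUniformly_tsum_nat hu norm_oddSineTerm_le
  have hint : ∀ T, ∫ x in (0 : ℝ)..T, F x = ∑' k, oddSineTermIntegral T k := fun T => by
    rw [hFeq]
    exact (hasSum_oddSineTermIntegral T).tsum_eq.symm
  refine ⟨fun x => hu.of_nonneg_of_le (fun _ => abs_nonneg _) (norm_oddSineTerm_le · x), hunif,
    hunif.continuous (.of_forall fun n => continuous_finsetSum _ fun k _ =>
      continuous_oddSineTerm k),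
    ⟨_, fun x => (hF x).symm ▸ tsum_of_norm_bounded hu.hasSum (norm_oddSineTerm_le · x)⟩,
    hint, 3, by norm_num, fun T hT => ?_⟩
  rw [hint, abs_of_nonneg (tsum_nonneg (oddSineTermIntegral_nonneg T))]
  exact tsum_oddSineTermIntegral_le hT
end

section
/- Let 0 < a < 1, let F ∈ C¹(ℝ^d; ℝ) satisfy |F(y)| ≤ |y|^a for all y ∈ ℝ^d, fix p ∈ ℝ^d and T > 0, and for each ε ∈ (0,1] let X^ε : [0,T] → ℝ^d be differentiable with dX^ε/dt (t) = (∇F)(X^ε(t)/ε) and X^ε(0) = p. Then there exists a constant C > 0, depending only on T, |p| and a, such that sup_{t∈[0,T]} |X^ε(t) − p| ≤ C ε^{(1−a)/2} for all ε ∈ (0,1]. In particular X^ε converges uniformly on [0,T] to the constant function X⁰(t) ≡ p as ε → 0. -/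
/-! The energy `ε F(X/ε)` grows along the flow at rate `‖dX/dt‖²`, so by the sublinear bound
`∫₀ᵗ ‖dX/ds‖² ds = ε (F(X(t)/ε) - F(p/ε)) ≤ ε^(1-a) (‖X(t)‖^a + ‖p‖^a)`, while Cauchy–Schwarz gives
`‖X(t) - p‖² ≤ t ∫₀ᵗ ‖dX/ds‖² ds`. For `r = ‖X(t) - p‖` this reads `r² ≲ ε^(1-a) ((‖p‖ + r)^a + ‖p‖^a)`;
as `a < 1` it first bounds `r` uniformly in `ε`, and then yields `r = O(ε^((1-a)/2))`. -/

open Set Filter Topology MeasureTheory InnerProductSpace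
open scoped Gradient

theorem sq_intervalIntegral_le_mul_intervalIntegral_sq {g : ℝ → ℝ} {t : ℝ} (ht : 0 ≤ t)
    (hg : IntervalIntegrable g volume 0 t) (hg2 : IntervalIntegrable (fun s ↦ g s ^ 2) volume 0 t) :
    (∫ s in 0..t, g s) ^ 2 ≤ t * ∫ s in 0..t, g s ^ 2 := by
  set I := ∫ s in 0..t, g s
  set J := ∫ s in 0..t, g s ^ 2
  -- `c ↦ ∫ (g - c)²` is a nonnegative quadratic polynomial, so its discriminant is nonpositive.
  have hquad : ∀ c : ℝ, 0 ≤ t * (c * c) + (-2 * I) * c + J := by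
    intro c
    have hexpand : ∫ s in 0..t, (g s - c) ^ 2 = t * (c * c) + (-2 * I) * c + J := by
      simp only [show ∀ s, (g s - c) ^ 2 = (g s ^ 2 - g s * (2 * c)) + c ^ 2 from
        fun s ↦ by ring]
      rw [intervalIntegral.integral_add (hg2.sub (hg.mul_const _)) intervalIntegrable_const,
        intervalIntegral.integral_sub hg2 (hg.mul_const _), intervalIntegral.integral_mul_const,
        intervalIntegral.integral_const, smul_eq_mul]
      ring
    rw [← hexpand]
    exact intervalIntegral.integral_nonneg ht fun s _ ↦ sq_nonneg _
  have := discrim_le_zero hquad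
  rw [discrim] at this
  linarith

theorem sq_norm_sub_le_mul_integral_sq_norm_deriv {E : Type*} [NormedAddCommGroup E]
    [NormedSpace ℝ E] [CompleteSpace E] {f f' : ℝ → E} {t : ℝ} (ht : 0 ≤ t)
    (hf : ∀ s ∈ Icc 0 t, HasDerivAt f (f' s) s) (hf' : ContinuousOn f' (Icc 0 t)) :
    ‖f t - f 0‖ ^ 2 ≤ t * ∫ s in 0..t, ‖f' s‖ ^ 2 := by
  have hftc : ∫ s in 0..t, f' s = f t - f 0 :=
    intervalIntegral.integral_eq_sub_of_hasDerivAt (by rwa [uIcc_of_le ht])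
      (hf'.intervalIntegrable_of_Icc ht)
  calc ‖f t - f 0‖ ^ 2 ≤ (∫ s in 0..t, ‖f' s‖) ^ 2 := by
        rw [← hftc]
        gcongr
        exact intervalIntegral.norm_integral_le_integral_norm ht
    _ ≤ t * ∫ s in 0..t, ‖f' s‖ ^ 2 :=
        sq_intervalIntegral_le_mul_intervalIntegral_sq ht
          (hf'.norm.intervalIntegrable_of_Icc ht) ((hf'.norm.pow 2).intervalIntegrable_of_Icc ht)

section GradientFlow

variable {E : Type*} [NormedAddCommGroup E] [InnerProductSpace ℝ E] [CompleteSpace E]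

theorem ContDiff.continuous_gradient {F : E → ℝ} (hF : ContDiff ℝ 1 F) : Continuous (∇ F) :=
  (toDual ℝ E).symm.continuous.comp (hF.continuous_fderiv one_ne_zero)

theorem hasDerivAt_apply_smul_of_hasDerivAt_gradient {F : E → ℝ} {Y : ℝ → E} {c s : ℝ}
    (hF : DifferentiableAt ℝ F (c • Y s)) (hY : HasDerivAt Y (∇ F (c • Y s)) s) :
    HasDerivAt (fun u ↦ F (c • Y u)) (c * ‖∇ F (c • Y s)‖ ^ 2) s := by
  have h := hF.hasFDerivAt.comp_hasDerivAt s (hY.const_smul c)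
  rwa [← inner_gradient_left, real_inner_smul_right, real_inner_self_eq_norm_sq] at h

theorem sq_norm_sub_le_of_hasDerivAt_gradient {F : E → ℝ} (hF : ContDiff ℝ 1 F) {Y : ℝ → E}
    {ε t : ℝ} (hε : ε ≠ 0) (ht : 0 ≤ t)
    (hY : ∀ s ∈ Icc 0 t, HasDerivAt Y (∇ F (ε⁻¹ • Y s)) s) :
    ‖Y t - Y 0‖ ^ 2 ≤ t * (ε * (F (ε⁻¹ • Y t) - F (ε⁻¹ • Y 0))) := by
  have hYc : ContinuousOn Y (Icc 0 t) := fun s hs ↦ (hY s hs).continuousAt.continuousWithinAt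
  have hG : ContinuousOn (fun s ↦ ∇ F (ε⁻¹ • Y s)) (Icc 0 t) :=
    hF.continuous_gradient.comp_continuousOn (hYc.const_smul _)
  have henergy : ∫ s in 0..t, ‖∇ F (ε⁻¹ • Y s)‖ ^ 2 = ε * (F (ε⁻¹ • Y t) - F (ε⁻¹ • Y 0)) := by
    have hderiv : ∀ s ∈ uIcc 0 t,
        HasDerivAt (fun u ↦ ε * F (ε⁻¹ • Y u)) (‖∇ F (ε⁻¹ • Y s)‖ ^ 2) s := by
      intro s hs
      rw [uIcc_of_le ht] at hs
      simpa only [mul_inv_cancel_left₀ hε] using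
        (hasDerivAt_apply_smul_of_hasDerivAt_gradient
          ((hF.differentiable one_ne_zero) _) (hY s hs)).const_mul ε
    rw [intervalIntegral.integral_eq_sub_of_hasDerivAt hderiv
      ((hG.norm.pow 2).intervalIntegrable_of_Icc ht), mul_sub]
  rw [← henergy]
  exact sq_norm_sub_le_mul_integral_sq_norm_deriv ht hY hG

end GradientFlow

theorem mul_abs_apply_inv_smul_le {E : Type*} [SeminormedAddCommGroup E] [NormedSpace ℝ E]
    {F : E → ℝ} {a ε : ℝ} (hFsub : ∀ y, |F y| ≤ ‖y‖ ^ a) (hε : 0 < ε) (y : E) :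
    ε * |F (ε⁻¹ • y)| ≤ ε ^ (1 - a) * ‖y‖ ^ a := by
  calc ε * |F (ε⁻¹ • y)| ≤ ε * ‖ε⁻¹ • y‖ ^ a := by gcongr; exact hFsub _
    _ = ε ^ (1 - a) * ‖y‖ ^ a := by
      rw [norm_smul, norm_inv, Real.norm_of_nonneg hε.le, Real.mul_rpow (by positivity)
        (norm_nonneg _), Real.inv_rpow hε.le, Real.rpow_sub hε, Real.rpow_one]
      field_simp

theorem mul_sub_apply_inv_smul_le {E : Type*} [SeminormedAddCommGroup E] [NormedSpace ℝ E]
    {F : E → ℝ} {a ε : ℝ} (hFsub : ∀ y, |F y| ≤ ‖y‖ ^ a) (hε : 0 < ε) (x y : E) :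
    ε * (F (ε⁻¹ • x) - F (ε⁻¹ • y)) ≤ ε ^ (1 - a) * (‖x‖ ^ a + ‖y‖ ^ a) := by
  calc ε * (F (ε⁻¹ • x) - F (ε⁻¹ • y)) ≤ ε * |F (ε⁻¹ • x)| + ε * |F (ε⁻¹ • y)| := by
        rw [← mul_add]
        gcongr
        exact (le_abs_self _).trans (abs_sub _ _)
    _ ≤ ε ^ (1 - a) * (‖x‖ ^ a + ‖y‖ ^ a) := by
        rw [mul_add]
        exact add_le_add (mul_abs_apply_inv_smul_le hFsub hε x)
          (mul_abs_apply_inv_smul_le hFsub hε y)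

theorem rpow_le_add_one {x a : ℝ} (hx : 0 ≤ x) (ha0 : 0 ≤ a) (ha1 : a ≤ 1) : x ^ a ≤ x + 1 := by
  rcases le_or_gt x 1 with h | h
  · linarith [Real.rpow_le_one hx h ha0]
  · linarith [Real.rpow_le_self_of_one_le h.le ha1]

theorem le_add_of_sq_le_mul_add {r A B : ℝ} (hA : 0 ≤ A) (hB : 0 ≤ B) (h : r ^ 2 ≤ A * (r + B)) :
    r ≤ A + B := by
  by_contra! hr
  nlinarith [mul_le_mul_of_nonneg_left (show A ≤ r by linarith) hB]

theorem sq_le_mul_of_sq_le_mul_rpow_add {r u P T η a : ℝ} (hu : 0 ≤ u) (hP : 0 ≤ P)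
    (huP : u ≤ P + r) (hT : 0 ≤ T) (hη0 : 0 ≤ η) (hη1 : η ≤ 1) (ha0 : 0 ≤ a) (ha1 : a ≤ 1)
    (h : r ^ 2 ≤ T * η * (u ^ a + P ^ a)) :
    r ^ 2 ≤ T * ((3 * P + T + 2) ^ a + P ^ a) * η := by
  have hcoarse : r ^ 2 ≤ T * (r + (2 * P + 2)) :=
    calc r ^ 2 ≤ T * η * (u ^ a + P ^ a) := h
      _ ≤ T * 1 * (u ^ a + P ^ a) := by gcongr
      _ ≤ T * 1 * ((u + 1) + (P + 1)) := by
          gcongr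
          exacts [rpow_le_add_one hu ha0 ha1, rpow_le_add_one hP ha0 ha1]
      _ ≤ T * (r + (2 * P + 2)) := by
          rw [mul_one]
          exact mul_le_mul_of_nonneg_left (by linarith) hT
  have hr : r ≤ T + (2 * P + 2) := le_add_of_sq_le_mul_add hT (by positivity) hcoarse
  calc r ^ 2 ≤ T * η * (u ^ a + P ^ a) := h
    _ ≤ T * η * ((3 * P + T + 2) ^ a + P ^ a) := by gcongr; linarith
    _ = T * ((3 * P + T + 2) ^ a + P ^ a) * η := by ring

theorem le_sqrt_mul_rpow_half_of_sq_le {r c ε b : ℝ} (hc : 0 ≤ c) (hε : 0 ≤ ε)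
    (h : r ^ 2 ≤ c * ε ^ b) : r ≤ √c * ε ^ (b / 2) :=
  calc r ≤ √(c * ε ^ b) := Real.le_sqrt_of_sq_le h
    _ = √c * ε ^ (b / 2) := by
      rw [Real.sqrt_mul hc, ← Real.sqrt_sq (Real.rpow_nonneg hε (b / 2)), ← Real.rpow_natCast,
        ← Real.rpow_mul hε]
      ring_nf

theorem tendstoUniformlyOn_of_norm_sub_le_mul_rpow {α E : Type*} [SeminormedAddCommGroup E]
    {f : ℝ → α → E} {g : α → E} {S : Set ℝ} {s : Set α} {C q : ℝ} (hq : 0 < q)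
    (h : ∀ ε ∈ S, ∀ x ∈ s, ‖f ε x - g x‖ ≤ C * ε ^ q) :
    TendstoUniformlyOn f g (𝓝[S] 0) s := by
  rw [Metric.tendstoUniformlyOn_iff]
  intro δ hδ
  have hlim : Tendsto (fun ε : ℝ ↦ C * ε ^ q) (𝓝 0) (𝓝 0) := by
    simpa [Real.zero_rpow hq.ne'] using
      ((Real.continuousAt_rpow_const 0 q (Or.inr hq.le)).tendsto.const_mul C)
  filter_upwards [(hlim.mono_left nhdsWithin_le_nhds).eventually_lt_const hδ,
    self_mem_nhdsWithin] with ε hεδ hεS x hx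
  rw [dist_comm, dist_eq_norm]
  exact (h ε hεS x hx).trans_lt hεδ

/-- trapping conclusion of Example 5: for the oscillating gradient
flow `dX^ε/dt = ∇F(X^ε/ε)`, `X^ε(0) = p`, with sublinear potential bound
`|F(y)| ≤ ‖y‖^a`, `0 < a < 1`, the trajectories stay within `C ε^{(1−a)/2}` of `p` on
`[0,T]`; in particular `X^ε` converges uniformly on `[0,T]` to the constant `p`. -/
theorem stmt_16
    (d : ℕ) (a : ℝ) (ha0 : 0 < a) (ha1 : a < 1)
    (F : EuclideanSpace ℝ (Fin d) → ℝ) (hF : ContDiff ℝ 1 F)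
    (hFsub : ∀ y : EuclideanSpace ℝ (Fin d), |F y| ≤ ‖y‖ ^ a)
    (p : EuclideanSpace ℝ (Fin d)) (T : ℝ) (hT : 0 < T)
    (X : ℝ → ℝ → EuclideanSpace ℝ (Fin d))
    (hXinit : ∀ ε ∈ Ioc (0:ℝ) 1, X ε 0 = p)
    (hXode : ∀ ε ∈ Ioc (0:ℝ) 1, ∀ t ∈ Icc (0:ℝ) T,
      HasDerivAt (X ε) (gradient F (ε⁻¹ • X ε t)) t) :
    (∃ C > (0:ℝ), ∀ ε ∈ Ioc (0:ℝ) 1, ∀ t ∈ Icc (0:ℝ) T,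
      ‖X ε t - p‖ ≤ C * ε ^ ((1 - a) / 2)) ∧
    TendstoUniformlyOn (fun ε t => X ε t) (fun _ => p)
      (nhdsWithin 0 (Ioc (0:ℝ) 1)) (Icc (0:ℝ) T) := by
  have hrate : ∀ ε ∈ Ioc (0:ℝ) 1, ∀ t ∈ Icc (0:ℝ) T,
      ‖X ε t - p‖ ≤ √(T * ((3 * ‖p‖ + T + 2) ^ a + ‖p‖ ^ a)) * ε ^ ((1 - a) / 2) := by
    rintro ε hε t ⟨ht0, htT⟩
    have hε0 : 0 < ε := hε.1
    have hflow := sq_norm_sub_le_of_hasDerivAt_gradient hF hε0.ne' ht0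
      fun s hs ↦ hXode ε hε s ⟨hs.1, hs.2.trans htT⟩
    rw [hXinit ε hε] at hflow
    have hpot : ‖X ε t - p‖ ^ 2 ≤ T * ε ^ (1 - a) * (‖X ε t‖ ^ a + ‖p‖ ^ a) :=
      calc ‖X ε t - p‖ ^ 2 ≤ t * (ε * (F (ε⁻¹ • X ε t) - F (ε⁻¹ • p))) := hflow
        _ ≤ t * (ε ^ (1 - a) * (‖X ε t‖ ^ a + ‖p‖ ^ a)) :=
          mul_le_mul_of_nonneg_left (mul_sub_apply_inv_smul_le hFsub hε0 _ _) ht0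
        _ ≤ T * ε ^ (1 - a) * (‖X ε t‖ ^ a + ‖p‖ ^ a) := by
          rw [mul_assoc]
          exact mul_le_mul_of_nonneg_right htT (by positivity)
    exact le_sqrt_mul_rpow_half_of_sq_le (by positivity) hε0.le
      (sq_le_mul_of_sq_le_mul_rpow_add (norm_nonneg _) (norm_nonneg p)
        (norm_le_norm_add_norm_sub' _ _) hT.le (Real.rpow_nonneg hε0.le _)
        (Real.rpow_le_one hε0.le hε.2 (by linarith)) ha0.le ha1.le hpot)
  exact ⟨⟨_, by positivity, hrate⟩,
    tendstoUniformlyOn_of_norm_sub_le_mul_rpow (by linarith) hrate⟩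
end
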